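/- For every real number a_1 with 6/5 < a_1 < 12/5, the real-valued pinwheel instance A = (a_1, 1/(5/6 − 1/a_1)) satisfies at least one of the following: (i) 6/5 < a_1 ≤ 3/2 and the periodic schedule |111112| is valid for A; (ii) 3/2 ≤ a_1 ≤ 2 and the periodic schedule |112| is valid for A; (iii) 2 ≤ a_1 ≤ 3 and the periodic schedule |12| is valid for A. -/
import Mathlib


/-- A schedule `S : ℤ → Fin k` is valid for the real-valued pinwheel instance
`a : Fin k → ℝ` if for every task `i`, every positive integer `l`, and every
integer `m`, task `i` is performed at least `l` times on the days
`t ∈ [m, m + ⌈l * a i⌉)`. -/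
def PinValid {k : ℕ} (a : Fin k → ℝ) (S : ℤ → Fin k) : Prop :=
  ∀ i : Fin k, ∀ l : ℕ, 0 < l → ∀ m : ℤ,
    (l : ℕ) ≤ ((Finset.Ico m (m + ⌈(l : ℝ) * a i⌉)).filter (fun t => S t = i)).card

/-- A real-valued pinwheel instance is schedulable if some schedule is valid for it. -/
def PinSchedulable {k : ℕ} (a : Fin k → ℝ) : Prop := ∃ S : ℤ → Fin k, PinValid a S

/-- The periodic schedule `|111112|`. -/
def S111112 : ℤ → Fin 2 := fun t => if t % 6 = 5 then 1 else 0

/-- The periodic schedule `|112|`. -/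
def S112 : ℤ → Fin 2 := fun t => if t % 3 = 2 then 1 else 0

/-- The periodic schedule `|12|`. -/
def S12 : ℤ → Fin 2 := fun t => if t % 2 = 1 then 1 else 0

lemma block_count (P : ℤ → Prop) [DecidablePred P] (p : ℤ) (hp : 0 ≤ p) (d : ℕ)
    (hb : ∀ m : ℤ, ((Finset.Ico m (m + p)).filter P).card = d) (l : ℕ) (m : ℤ) :
    ((Finset.Ico m (m + p * l)).filter P).card = d * l := by
  induction l generalizing m with
  | zero => simp
  | succ n ih =>
      have hpn : (0:ℤ) ≤ p * n := by positivity
      have h1 : m + p * ((n:ℤ)+1) = (m + p) + p * n := by ring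
      have hu : Finset.Ico m (m + p * ((n:ℕ)+1:ℕ)) =
          Finset.Ico m (m+p) ∪ Finset.Ico (m+p) ((m+p) + p*n) := by
        rw [Finset.Ico_union_Ico_eq_Ico (by linarith) (by linarith)]
        push_cast
        rw [h1]
      rw [hu, Finset.filter_union,
        Finset.card_union_of_disjoint
          (Finset.disjoint_filter_filter (Finset.Ico_disjoint_Ico_consecutive m (m+p) _)),
        hb, ih]
      ring

lemma count_lower (P : ℤ → Prop) [DecidablePred P] (p : ℤ) (hp : 0 ≤ p) (d : ℕ)
    (hb : ∀ m : ℤ, ((Finset.Ico m (m + p)).filter P).card = d) (l : ℕ) (m N : ℤ)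
    (h : p * l ≤ N) : d * l ≤ ((Finset.Ico m (m + N)).filter P).card := by
  rw [← block_count P p hp d hb l m]
  exact Finset.card_le_card (Finset.filter_subset_filter _
    (Finset.Ico_subset_Ico le_rfl (by linarith)))

lemma count_upper (P : ℤ → Prop) [DecidablePred P] (p : ℤ) (hp : 0 ≤ p) (d : ℕ)
    (hb : ∀ m : ℤ, ((Finset.Ico m (m + p)).filter P).card = d) (q : ℕ) (m N : ℤ)
    (h : N ≤ p * q) : ((Finset.Ico m (m + N)).filter P).card ≤ d * q := by
  rw [← block_count P p hp d hb q m]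
  exact Finset.card_le_card (Finset.filter_subset_filter _
    (Finset.Ico_subset_Ico le_rfl (by linarith)))

lemma modblock6 (m : ℤ) : ((Finset.Ico m (m+6)).filter (fun t => t % 6 = 5)).card = 1 := by
  have : ((Finset.Ico m (m+6)).filter (fun t => t % 6 = 5)) = {m + (5 - m) % 6} := by
    ext t
    simp only [Finset.mem_filter, Finset.mem_Ico, Finset.mem_singleton]
    omega
  rw [this]; simp

lemma modblock3 (m : ℤ) : ((Finset.Ico m (m+3)).filter (fun t => t % 3 = 2)).card = 1 := by
  have : ((Finset.Ico m (m+3)).filter (fun t => t % 3 = 2)) = {m + (2 - m) % 3} := by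
    ext t
    simp only [Finset.mem_filter, Finset.mem_Ico, Finset.mem_singleton]
    omega
  rw [this]; simp

lemma modblock2 (m : ℤ) : ((Finset.Ico m (m+2)).filter (fun t => t % 2 = 1)).card = 1 := by
  have : ((Finset.Ico m (m+2)).filter (fun t => t % 2 = 1)) = {m + (1 - m) % 2} := by
    ext t
    simp only [Finset.mem_filter, Finset.mem_Ico, Finset.mem_singleton]
    omega
  rw [this]; simp

lemma S111112_one (t : ℤ) : S111112 t = 1 ↔ t % 6 = 5 := by
  unfold S111112; split <;> simp_all

lemma S112_one (t : ℤ) : S112 t = 1 ↔ t % 3 = 2 := by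
  unfold S112; split <;> simp_all

lemma S12_one (t : ℤ) : S12 t = 1 ↔ t % 2 = 1 := by
  unfold S12; split <;> simp_all

lemma fin2_zero (x : Fin 2) : x = 0 ↔ ¬ x = 1 := by revert x; decide

/-- Lower bound for the sparse task (label `1`). -/
lemma valid_light (S : ℤ → Fin 2) (p : ℤ) (hp : 0 ≤ p)
    (hb : ∀ m : ℤ, ((Finset.Ico m (m + p)).filter (fun t => S t = 1)).card = 1)
    (a : ℝ) (ha : (p : ℝ) ≤ a) (l : ℕ) (m : ℤ) :
    l ≤ ((Finset.Ico m (m + ⌈(l : ℝ) * a⌉)).filter (fun t => S t = 1)).card := by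
  have hl0 : (0:ℝ) ≤ (l : ℝ) := by positivity
  have h1 : ((p * l : ℤ) : ℝ) ≤ (l : ℝ) * a := by
    push_cast
    nlinarith
  have h2 : p * l ≤ ⌈(l : ℝ) * a⌉ := by
    have := h1.trans (Int.le_ceil _)
    exact_mod_cast this
  simpa using count_lower (fun t => S t = 1) p hp 1 hb l m _ h2

/-- Lower bound for the dense task (label `0`). -/
lemma valid_heavy (S : ℤ → Fin 2) (p : ℤ) (hp : 0 ≤ p)
    (hb : ∀ m : ℤ, ((Finset.Ico m (m + p)).filter (fun t => S t = 1)).card = 1)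
    (l q : ℕ) (m N : ℤ) (hq : N ≤ p * q) (hlq : (q : ℤ) + l ≤ N) :
    l ≤ ((Finset.Ico m (m + N)).filter (fun t => S t = 0)).card := by
  have hsum : ((Finset.Ico m (m + N)).filter (fun t => S t = 1)).card
      + ((Finset.Ico m (m + N)).filter (fun t => S t = 0)).card = N.toNat := by
    simp only [fin2_zero]
    rw [Finset.card_filter_add_card_filter_not]
    simp
  have hup := count_upper (fun t => S t = 1) p hp 1 hb q m N hq
  omega

theorem real_two_periods_exact_density
    (a₁ : ℝ) (h₁ : 6 / 5 < a₁) (h₂ : a₁ < 12 / 5) :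
    (6 / 5 < a₁ ∧ a₁ ≤ 3 / 2 ∧ PinValid ![a₁, 1 / (5 / 6 - 1 / a₁)] S111112) ∨
    (3 / 2 ≤ a₁ ∧ a₁ ≤ 2 ∧ PinValid ![a₁, 1 / (5 / 6 - 1 / a₁)] S112) ∨
    (2 ≤ a₁ ∧ a₁ ≤ 3 ∧ PinValid ![a₁, 1 / (5 / 6 - 1 / a₁)] S12) := by
  have ha : (0:ℝ) < a₁ := by linarith
  have h1a : 1 / a₁ < 5 / 6 := by
    rw [div_lt_div_iff₀ ha (by norm_num)]; linarith
  have hx : (0:ℝ) < 5 / 6 - 1 / a₁ := by linarith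
  rcases le_or_gt a₁ (3/2) with hle | hgt
  · -- schedule |111112|
    left
    refine ⟨h₁, hle, ?_⟩
    have hb6 : ∀ m : ℤ, ((Finset.Ico m (m + 6)).filter (fun t => S111112 t = 1)).card = 1 := by
      intro m; simp only [S111112_one]; exact modblock6 m
    have ha₂ : (6:ℝ) ≤ 1 / (5 / 6 - 1 / a₁) := by
      have h2a : 2 / 3 ≤ 1 / a₁ := by
        rw [div_le_div_iff₀ (by norm_num) ha]; linarith
      have hxu : 5 / 6 - 1 / a₁ ≤ 1 / 6 := by linarith
      have := one_div_le_one_div_of_le hx hxu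
      norm_num [one_div] at this ⊢
      linarith
    intro i l hl m
    fin_cases i
    · simp only [Matrix.cons_val_zero]
      set N := ⌈(l : ℝ) * a₁⌉ with hN
      have hl1 : (1:ℝ) ≤ (l:ℝ) := by exact_mod_cast hl
      have hceil : ((6 * l : ℤ) : ℝ) < 5 * (N : ℝ) := by
        have hc := Int.le_ceil ((l : ℝ) * a₁)
        push_cast
        nlinarith
      have h5N : 6 * (l : ℤ) < 5 * N := by exact_mod_cast hceil
      exact valid_heavy S111112 6 (by norm_num) hb6 l ((N + 5) / 6).toNat m N
        (by omega) (by omega)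
    · simp only [Matrix.cons_val_one, Matrix.head_cons]
      exact valid_light S111112 6 (by norm_num) hb6 _ (by exact_mod_cast ha₂) l m
  · rcases le_or_gt a₁ 2 with hle2 | hgt2
    · -- schedule |112|
      right; left
      refine ⟨le_of_lt hgt, hle2, ?_⟩
      have hb3 : ∀ m : ℤ, ((Finset.Ico m (m + 3)).filter (fun t => S112 t = 1)).card = 1 := by
        intro m; simp only [S112_one]; exact modblock3 m
      have ha₂ : (3:ℝ) ≤ 1 / (5 / 6 - 1 / a₁) := by
        have h2a : 1 / 2 ≤ 1 / a₁ := by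
          rw [div_le_div_iff₀ (by norm_num) ha]; linarith
        have hxu : 5 / 6 - 1 / a₁ ≤ 1 / 3 := by linarith
        have := one_div_le_one_div_of_le hx hxu
        norm_num [one_div] at this ⊢
        linarith
      intro i l hl m
      fin_cases i
      · simp only [Matrix.cons_val_zero]
        set N := ⌈(l : ℝ) * a₁⌉ with hN
        have hceil : ((3 * l : ℤ) : ℝ) ≤ 2 * (N : ℝ) := by
          have hc := Int.le_ceil ((l : ℝ) * a₁)
          have hl0 : (0:ℝ) ≤ (l:ℝ) := by positivity
          push_cast
          nlinarith
        have h2N : 3 * (l : ℤ) ≤ 2 * N := by exact_mod_cast hceil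
        exact valid_heavy S112 3 (by norm_num) hb3 l ((N + 2) / 3).toNat m N
          (by omega) (by omega)
      · simp only [Matrix.cons_val_one, Matrix.head_cons]
        exact valid_light S112 3 (by norm_num) hb3 _ (by exact_mod_cast ha₂) l m
    · -- schedule |12|
      right; right
      refine ⟨le_of_lt hgt2, by linarith, ?_⟩
      have hb2 : ∀ m : ℤ, ((Finset.Ico m (m + 2)).filter (fun t => S12 t = 1)).card = 1 := by
        intro m; simp only [S12_one]; exact modblock2 m
      have ha₂ : (2:ℝ) ≤ 1 / (5 / 6 - 1 / a₁) := by
        have h2a : 1 / 3 ≤ 1 / a₁ := by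
          rw [div_le_div_iff₀ (by norm_num) ha]; linarith
        have hxu : 5 / 6 - 1 / a₁ ≤ 1 / 2 := by linarith
        have := one_div_le_one_div_of_le hx hxu
        norm_num [one_div] at this ⊢
        linarith
      intro i l hl m
      fin_cases i
      · simp only [Matrix.cons_val_zero]
        set N := ⌈(l : ℝ) * a₁⌉ with hN
        have hceil : ((2 * l : ℤ) : ℝ) ≤ (N : ℝ) := by
          have hc := Int.le_ceil ((l : ℝ) * a₁)
          have hl0 : (0:ℝ) ≤ (l:ℝ) := by positivity
          push_cast
          nlinarith
        have h2N : 2 * (l : ℤ) ≤ N := by exact_mod_cast hceil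
        exact valid_heavy S12 2 (by norm_num) hb2 l ((N + 1) / 2).toNat m N
          (by omega) (by omega)
      · simp only [Matrix.cons_val_one, Matrix.head_cons]
        exact valid_light S12 2 (by norm_num) hb2 _ (by exact_mod_cast ha₂) l m
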